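/- arXiv:2005.07311 — 2 statements merged into one kernel-verified Lean document; each statement's English description precedes it below -/
import Mathlib

section
/- Every graph of adjacency dimension k has order at most k + 2^k, and this bound is attained for every k ≥ 1. -/
open SimpleGraph Finset

variable {V : Type*}

/-- truncated distance `d_k(x,y) = min(d(x,y), k+1)` with `d = ∞` across components. -/
noncomputable def truncDist (G : SimpleGraph V) (k : ℕ) (x y : V) : ℕ∞ :=
  min (G.edist x y) (k + 1)

/-- `f` is a resolving broadcast of `G`. -/
def IsResolvingBroadcast (G : SimpleGraph V) (f : V → ℕ) : Prop :=
  ∀ x y : V, x ≠ y → ∃ z : V, 0 < f z ∧ truncDist G (f z) x z ≠ truncDist G (f z) y z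

/-- broadcast dimension -/
noncomputable def bdim (G : SimpleGraph V) [Fintype V] : ℕ :=
  sInf {c : ℕ | ∃ f : V → ℕ, IsResolvingBroadcast G f ∧ ∑ v, f v = c}

/-- adjacency resolving set -/
def IsAdjResolvingSet (G : SimpleGraph V) (S : Set V) : Prop :=
  ∀ x y : V, x ≠ y → ∃ z ∈ S, truncDist G 1 x z ≠ truncDist G 1 y z

/-- adjacency dimension -/
noncomputable def adim (G : SimpleGraph V) [Fintype V] : ℕ :=
  sInf {n : ℕ | ∃ S : Finset V, IsAdjResolvingSet G ↑S ∧ S.card = n}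

/-- resolving set (metric dimension) -/
def IsResolvingSet (G : SimpleGraph V) (S : Set V) : Prop :=
  ∀ x y : V, x ≠ y → ∃ z ∈ S, G.edist x z ≠ G.edist y z

/-- metric dimension -/
noncomputable def mdim (G : SimpleGraph V) [Fintype V] : ℕ :=
  sInf {n : ℕ | ∃ S : Finset V, IsResolvingSet G ↑S ∧ S.card = n}

/-!
Outside an adjacency resolving set `S`, a vertex is at distance `1` or `2` from each `z ∈ S`
according as it is adjacent to `z` or not, so it is determined by its neighbourhood in `S`:
at most `2 ^ |S|` vertices lie outside `S`. Equality is attained by the bipartite graph joining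
the elements of a `k`-set to all of its subsets by membership, resolved by the `k` elements;
since `n ↦ n + 2 ^ n` is strictly increasing, no smaller set resolves it.
-/

section AdjResolving

variable {G : SimpleGraph V} {x y z : V}

lemma truncDist_eq_zero_iff {k : ℕ} : truncDist G k x y = 0 ↔ x = y := by
  simp [truncDist, edist_eq_zero_iff]

lemma truncDist_self_ne {k : ℕ} (h : x ≠ y) : truncDist G k x x ≠ truncDist G k y x := by
  rw [truncDist_eq_zero_iff.mpr rfl, ne_comm, Ne, truncDist_eq_zero_iff]
  exact h.symm

lemma truncDist_one_of_adj (h : G.Adj x z) : truncDist G 1 x z = 1 := by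
  simp [truncDist, edist_eq_one_iff_adj.mpr h]

lemma truncDist_one_of_not_adj (hne : x ≠ z) (h : ¬G.Adj x z) : truncDist G 1 x z = 2 := by
  have : 1 < G.edist x z := by
    simpa [edist_le_one_iff_adj_or_eq, h, hne] using (not_le (a := G.edist x z) (b := 1))
  have : 2 ≤ G.edist x z := Order.add_one_le_of_lt this
  norm_num [truncDist, min_eq_right this]

lemma truncDist_one_eq_iff (hx : x ≠ z) (hy : y ≠ z) :
    truncDist G 1 x z = truncDist G 1 y z ↔ (G.Adj x z ↔ G.Adj y z) := by
  by_cases hxz : G.Adj x z <;> by_cases hyz : G.Adj y z <;>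
    simp [hxz, hyz, truncDist_one_of_adj, truncDist_one_of_not_adj, hx, hy]

/-- Vertices of `S` are told apart by themselves, so only pairs outside `S` need checking. -/
lemma isAdjResolvingSet_iff {S : Set V} : IsAdjResolvingSet G S ↔
    ∀ x ∉ S, ∀ y ∉ S, x ≠ y → ∃ z ∈ S, ¬(G.Adj x z ↔ G.Adj y z) := by
  refine ⟨fun h x hx y hy hxy => ?_, fun h x y hxy => ?_⟩
  · obtain ⟨z, hz, hd⟩ := h x y hxy
    exact ⟨z, hz, mt (truncDist_one_eq_iff (ne_of_mem_of_not_mem hz hx).symm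
      (ne_of_mem_of_not_mem hz hy).symm).mpr hd⟩
  · by_cases hx : x ∈ S
    · exact ⟨x, hx, truncDist_self_ne hxy⟩
    by_cases hy : y ∈ S
    · exact ⟨y, hy, (truncDist_self_ne hxy.symm).symm⟩
    obtain ⟨z, hz, hd⟩ := h x hx y hy hxy
    exact ⟨z, hz, mt (truncDist_one_eq_iff (ne_of_mem_of_not_mem hz hx).symm
      (ne_of_mem_of_not_mem hz hy).symm).mp hd⟩

lemma isAdjResolvingSet_univ : IsAdjResolvingSet G Set.univ :=
  isAdjResolvingSet_iff.mpr fun _ hx => absurd (Set.mem_univ _) hx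

/-- A vertex outside `S` is determined by its neighbourhood in `S`, a subset of `S`. -/
lemma IsAdjResolvingSet.card_le [Fintype V] {S : Finset V} (h : IsAdjResolvingSet G S) :
    Fintype.card V ≤ #S + 2 ^ #S := by
  classical
  have hcompl : #Sᶜ ≤ #S.powerset := by
    refine card_le_card_of_injOn (fun v => {z ∈ S | G.Adj v z})
      (fun _ _ => mem_coe.mpr (mem_powerset.mpr (filter_subset _ _))) ?_
    intro v hv w hw hvw
    by_contra hne
    obtain ⟨z, hz, hd⟩ :=
      isAdjResolvingSet_iff.mp h v (by simpa using hv) w (by simpa using hw) hne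
    have := Finset.ext_iff.mp hvw z
    simp only [mem_filter] at this
    exact hd (and_congr_right_iff.mp this hz)
  rw [← card_add_card_compl S, ← card_powerset]
  omega

lemma exists_isAdjResolvingSet_card_eq_adim (G : SimpleGraph V) [Fintype V] :
    ∃ S : Finset V, IsAdjResolvingSet G ↑S ∧ #S = adim G :=
  Nat.sInf_mem (s := {n | ∃ S : Finset V, IsAdjResolvingSet G ↑S ∧ #S = n})
    ⟨_, univ, by simpa using isAdjResolvingSet_univ, rfl⟩

lemma IsAdjResolvingSet.adim_le [Fintype V] {S : Finset V} (h : IsAdjResolvingSet G ↑S) :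
    adim G ≤ #S :=
  Nat.sInf_le ⟨S, h, rfl⟩

lemma card_le_adim_add_two_pow_adim (G : SimpleGraph V) [Fintype V] :
    Fintype.card V ≤ adim G + 2 ^ adim G := by
  obtain ⟨S, hS, hcard⟩ := exists_isAdjResolvingSet_card_eq_adim G
  exact hcard ▸ hS.card_le

end AdjResolving

def memGraph (α : Type*) : SimpleGraph (α ⊕ Finset α) where
  Adj
    | .inl a, .inr s => a ∈ s
    | .inr s, .inl a => a ∈ s
    | _, _ => False
  symm := ⟨by rintro (a | s) (b | t) h <;> exact h⟩
  loopless := ⟨by rintro (a | s) h <;> exact h⟩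

section MemGraph

variable {α : Type*}

@[simp]
lemma memGraph_adj_inr_inl {s : Finset α} {a : α} :
    (memGraph α).Adj (.inr s) (.inl a) ↔ a ∈ s :=
  Iff.rfl

lemma isAdjResolvingSet_range_inl : IsAdjResolvingSet (memGraph α) (Set.range Sum.inl) := by
  refine isAdjResolvingSet_iff.mpr ?_
  rintro (a | s) hx (b | t) hy hne
  · exact absurd ⟨a, rfl⟩ hx
  · exact absurd ⟨a, rfl⟩ hx
  · exact absurd ⟨b, rfl⟩ hy
  obtain ⟨a, ha⟩ : ∃ a, ¬(a ∈ s ↔ a ∈ t) := by simpa [Finset.ext_iff] using hne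
  exact ⟨.inl a, ⟨a, rfl⟩, by simpa using ha⟩

lemma adim_memGraph [Fintype α] : adim (memGraph α) = Fintype.card α := by
  refine le_antisymm ?_ ?_
  · simpa using IsAdjResolvingSet.adim_le (S := univ.map .inl)
      (by simpa using isAdjResolvingSet_range_inl)
  · have hmono : StrictMono fun n : ℕ => n + 2 ^ n :=
      strictMono_id.add (pow_right_strictMono₀ one_lt_two)
    refine hmono.le_iff_le.mp ?_
    simpa [Fintype.card_finset] using card_le_adim_add_two_pow_adim (memGraph α)

end MemGraph

theorem stmt_6_general (k : ℕ) :
    (∀ (V : Type) (_ : Fintype V) (_ : DecidableEq V) (G : SimpleGraph V),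
      adim G = k → Fintype.card V ≤ k + 2 ^ k) ∧
    ∃ (V : Type) (_ : Fintype V) (_ : DecidableEq V) (G : SimpleGraph V),
      adim G = k ∧ Fintype.card V = k + 2 ^ k :=
  ⟨fun _ _ _ G hG => hG ▸ card_le_adim_add_two_pow_adim G,
    ⟨Fin k ⊕ Finset (Fin k), inferInstance, inferInstance, memGraph (Fin k),
      by simp [adim_memGraph], by simp [Fintype.card_finset]⟩⟩

theorem stmt_6 (k : ℕ) (hk : 1 ≤ k) :
    (∀ (V : Type) (_ : Fintype V) (_ : DecidableEq V) (G : SimpleGraph V),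
      adim G = k → Fintype.card V ≤ k + 2 ^ k) ∧
    ∃ (V : Type) (_ : Fintype V) (_ : DecidableEq V) (G : SimpleGraph V),
      adim G = k ∧ Fintype.card V = k + 2 ^ k :=
  stmt_6_general k
end

section
/- For any graph G and any edge e ∈ E(G), adim(G) − 1 ≤ adim(G−e) ≤ adim(G) + 1. -/
open SimpleGraph Finset

variable {V : Type*}

open scoped Classical in
lemma trunc1_eq (G : SimpleGraph V) (u z : V) :
    truncDist G 1 u z = if u = z then 0 else if G.Adj u z then 1 else 2 := by
  unfold truncDist
  split_ifs with h1 h2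
  · subst h1; simp [SimpleGraph.edist_self]
  · rw [(SimpleGraph.edist_eq_one_iff_adj).2 h2]
    norm_num
  · have h0 : G.edist u z ≠ 0 := fun h => h1 (SimpleGraph.edist_eq_zero_iff.mp h)
    have hne1 : G.edist u z ≠ 1 := fun h => h2 (SimpleGraph.edist_eq_one_iff_adj.mp h)
    have h2' : (2 : ℕ∞) ≤ G.edist u z := by
      have h1' : 1 ≤ G.edist u z := Order.one_le_iff_pos.mpr (pos_iff_ne_zero.mpr h0)
      have := lt_of_le_of_ne h1' (Ne.symm hne1)
      exact Order.add_one_le_of_lt this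
    have : ((1:ℕ):ℕ∞) + 1 = 2 := by norm_num
    rw [this, min_eq_right h2']

lemma trunc1_self_ne (G : SimpleGraph V) {a b : V} (h : a ≠ b) :
    truncDist G 1 a b ≠ truncDist G 1 b b := by
  classical
  rw [trunc1_eq, trunc1_eq, if_pos rfl, if_neg h]
  split_ifs <;> simp

lemma adim_set_nonempty (G : SimpleGraph V) [Fintype V] :
    {n : ℕ | ∃ S : Finset V, IsAdjResolvingSet G ↑S ∧ S.card = n}.Nonempty := by
  refine ⟨(univ : Finset V).card, univ, ?_, rfl⟩
  intro a b hab
  exact ⟨b, by simp, trunc1_self_ne G hab⟩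

lemma adim_le_of_agree [Fintype V] [DecidableEq V] (G₁ G₂ : SimpleGraph V) (x y : V)
    (h : ∀ u z : V, ¬(u = x ∧ z = y) → ¬(u = y ∧ z = x) →
      truncDist G₁ 1 u z = truncDist G₂ 1 u z) :
    adim G₂ ≤ adim G₁ + 1 := by
  have hmem : adim G₁ ∈ {n : ℕ | ∃ S : Finset V, IsAdjResolvingSet G₁ ↑S ∧ S.card = n} :=
    Nat.sInf_mem (adim_set_nonempty G₁)
  obtain ⟨S, hS, hcard⟩ := hmem
  by_cases hxy : x ∈ S ∨ y ∈ S
  · set T : Finset V := insert x (insert y S) with hT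
    have hST : S ⊆ T := fun a ha => by simp [hT, ha]
    have hres : IsAdjResolvingSet G₂ ↑T := by
      intro u v huv
      obtain ⟨z, hz, hd⟩ := hS u v huv
      by_cases heq : truncDist G₂ 1 u z = truncDist G₂ 1 v z
      · have hcase : (u = x ∧ z = y) ∨ (u = y ∧ z = x) ∨ (v = x ∧ z = y) ∨ (v = y ∧ z = x) := by
          by_contra hc
          push_neg at hc
          exact hd (by rw [h u z (fun hh => (hc.1 hh.1 hh.2)) (fun hh => (hc.2.1 hh.1 hh.2)),
            h v z (fun hh => (hc.2.2.1 hh.1 hh.2)) (fun hh => (hc.2.2.2 hh.1 hh.2))]; exact heq)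
        have hu_mem : ∀ w : V, w = x ∨ w = y → w ∈ T := by
          rintro w (rfl | rfl) <;> simp [hT]
        rcases hcase with ⟨h1, _⟩ | ⟨h1, _⟩ | ⟨h1, _⟩ | ⟨h1, _⟩
        · exact ⟨u, by simpa using hu_mem u (Or.inl h1),
            fun hh => (trunc1_self_ne G₂ (Ne.symm huv)) hh.symm⟩
        · exact ⟨u, by simpa using hu_mem u (Or.inr h1),
            fun hh => (trunc1_self_ne G₂ (Ne.symm huv)) hh.symm⟩
        · exact ⟨v, by simpa using hu_mem v (Or.inl h1), trunc1_self_ne G₂ huv⟩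
        · exact ⟨v, by simpa using hu_mem v (Or.inr h1), trunc1_self_ne G₂ huv⟩
      · exact ⟨z, by simpa using hST (by simpa using hz), heq⟩
    have hcardT : T.card ≤ S.card + 1 := by
      rcases hxy with hx | hy
      · have : x ∈ insert y S := by simp [hx]
        rw [hT, Finset.card_insert_of_mem this]
        exact Finset.card_insert_le _ _
      · rw [hT, Finset.insert_eq_self.mpr hy]
        exact Finset.card_insert_le _ _
    calc adim G₂ ≤ T.card := Nat.sInf_le ⟨T, hres, rfl⟩
      _ ≤ S.card + 1 := hcardT
      _ = adim G₁ + 1 := by rw [hcard]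
  · push_neg at hxy
    have hres : IsAdjResolvingSet G₂ ↑S := by
      intro u v huv
      obtain ⟨z, hz, hd⟩ := hS u v huv
      have hzx : z ≠ x := fun hh => hxy.1 (hh ▸ (by simpa using hz))
      have hzy : z ≠ y := fun hh => hxy.2 (hh ▸ (by simpa using hz))
      refine ⟨z, hz, ?_⟩
      rw [← h u z (fun hh => hzy hh.2) (fun hh => hzx hh.2),
        ← h v z (fun hh => hzy hh.2) (fun hh => hzx hh.2)]
      exact hd
    have h2 : adim G₂ ≤ S.card := Nat.sInf_le ⟨S, hres, rfl⟩
    rw [hcard] at h2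
    omega

theorem stmt_17 {V : Type*} [Fintype V] [DecidableEq V] (G : SimpleGraph V)
    (x y : V) (he : G.Adj x y) :
    adim G - 1 ≤ adim (G.deleteEdges {s(x, y)}) ∧
    adim (G.deleteEdges {s(x, y)}) ≤ adim G + 1 := by
  classical
  set G' := G.deleteEdges {s(x, y)} with hG'
  have hadj : ∀ u z : V, ¬(u = x ∧ z = y) → ¬(u = y ∧ z = x) → (G'.Adj u z ↔ G.Adj u z) := by
    intro u z h1 h2
    rw [hG']
    simp only [SimpleGraph.deleteEdges_adj, Set.mem_singleton_iff, Sym2.eq_iff]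
    tauto
  have hag : ∀ u z : V, ¬(u = x ∧ z = y) → ¬(u = y ∧ z = x) →
      truncDist G 1 u z = truncDist G' 1 u z := by
    intro u z h1 h2
    rw [trunc1_eq, trunc1_eq]
    by_cases huz : u = z
    · simp [huz]
    · by_cases hA : G.Adj u z <;>
        simp [huz, hA, (hadj u z h1 h2)]
  constructor
  · exact tsub_le_iff_right.mpr (adim_le_of_agree G' G x y (fun u z h1 h2 => (hag u z h1 h2).symm))
  · exact adim_le_of_agree G G' x y hag
end
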